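/- arXiv:2508.00183 — 2 statements merged into one kernel-verified Lean document; each statement's English description precedes it below -/
import Mathlib

section
/- If (D, A) is a {±1}-protocol with parameters (k, n, ℓ), then for every integer t with ℓ ≤ t ≤ n, 2^k ≤ (1 + ln(C(t,ℓ))) · (C(n,ℓ)/C(t,ℓ)) · 2^t, where C(a,b) denotes the binomial coefficient. -/
/-!
Every column of `D * A` is a combination of at most `ℓ` columns of `D`. Given an
`(n, t, ℓ)`-covering design `𝒞`, every sign vector therefore lies in the span of `t` columns of `D`
indexed by a block of `𝒞`. Such a span has dimension at most `t`, and a subspace of dimension `d`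
contains at most `2 ^ d` sign vectors, because some `d` coordinates determine its elements. Hence
`2 ^ k ≤ #𝒞 * 2 ^ t`.

The covering design is built greedily. Every `ℓ`-set lies in `r = C(n - ℓ, t - ℓ)` of the `t`-sets,
and the potential `∑_T H(number of uncovered ℓ-subsets of T)`, with `H` the harmonic numbers, drops
by at least `r` at each greedy choice. Hence `#𝒞 * r ≤ C(n, t) * H(C(t, ℓ))`, that is
`#𝒞 ≤ H(C(t, ℓ)) * C(n, ℓ) / C(t, ℓ)`, and `H(q) ≤ 1 + log q`.
-/

/-- A `{±1}`-protocol with parameters `(k, n, ℓ)`. -/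
def IsPMOneProtocol (k n ℓ : ℕ) (D : Matrix (Fin k) (Fin n) ℝ)
    (A : Matrix (Fin n) (Fin (2 ^ k)) ℝ) : Prop :=
  (∀ w : Fin k → ℝ, (∀ i, w i = 1 ∨ w i = -1) → ∃ j, ∀ i, (D * A) i j = w i) ∧
  (∀ j, Set.ncard {i | A i j ≠ 0} ≤ ℓ)

open Finset Module Matrix

theorem div_le_harmonic_sub_harmonic {a b c : ℕ} (hcb : c ≤ b) (hba : b ≤ a) :
    ((b - c : ℕ) : ℚ) / a ≤ harmonic b - harmonic c := by
  induction b, hcb using Nat.le_induction with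
  | base => simp
  | succ m hcm ih =>
    have hma : (m + 1 : ℚ) ≤ a := by exact_mod_cast hba
    calc ((m + 1 - c : ℕ) : ℚ) / a = ((m - c : ℕ) : ℚ) / a + 1 / a := by
          rw [Nat.sub_add_comm hcm]; push_cast; ring
      _ ≤ (harmonic m - harmonic c) + 1 / (m + 1) := by
          gcongr
          exact ih (by omega)
      _ = harmonic (m + 1) - harmonic c := by
          rw [harmonic_succ]; push_cast; ring

section GreedyCover

variable {α β : Type*} [DecidableEq α] (𝒯 : Finset β) (B : β → Finset α)

theorem card_mul_le_sum_card_inter {S : Finset α} {r : ℕ} (h : ∀ x ∈ S, r ≤ #{T ∈ 𝒯 | x ∈ B T}) :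
    #S * r ≤ ∑ T ∈ 𝒯, #(B T ∩ S) := by
  refine (S.card_nsmul_le_sum _ _ h).trans_eq ?_
  simp_rw [card_eq_sum_ones, sum_filter, inter_comm, ← filter_mem_eq_inter, sum_filter]
  exact sum_comm

theorem le_sum_harmonic_sub_harmonic {R : Finset α} {r : ℕ}
    (hdeg : ∀ x ∈ R, r ≤ #{T ∈ 𝒯 | x ∈ B T}) {G : β}
    (hmax : ∀ T ∈ 𝒯, #(B T ∩ R) ≤ #(B G ∩ R)) (hG : (B G ∩ R).Nonempty) :
    (r : ℚ) ≤ ∑ T ∈ 𝒯, (harmonic #(B T ∩ R) - harmonic #(B T ∩ (R \ B G))) := by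
  set a := #(B G ∩ R)
  have ha : (0 : ℚ) < a := by exact_mod_cast hG.card_pos
  have hsplit : ∀ T, #(B T ∩ (R \ B G)) + #(B T ∩ (B G ∩ R)) = #(B T ∩ R) := fun T => by
    rw [← card_union_of_disjoint]
    · congr 1; ext x; simp only [mem_union, mem_inter, mem_sdiff]; tauto
    · exact disjoint_left.2 fun x hx hx' => (mem_sdiff.1 (mem_inter.1 hx).2).2
        (mem_inter.1 (mem_inter.1 hx').2).1
  calc (r : ℚ) = (a * r : ℕ) / a := by push_cast; field_simp
    _ ≤ (∑ T ∈ 𝒯, #(B T ∩ (B G ∩ R)) : ℕ) / a := by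
        gcongr
        exact card_mul_le_sum_card_inter 𝒯 B fun x hx => hdeg x (mem_inter.1 hx).2
    _ = ∑ T ∈ 𝒯, ((#(B T ∩ R) - #(B T ∩ (R \ B G)) : ℕ) : ℚ) / a := by
        rw [Nat.cast_sum, sum_div]
        refine sum_congr rfl fun T _ => ?_
        rw [← hsplit T, Nat.add_sub_cancel_left]
    _ ≤ _ := sum_le_sum fun T hT => div_le_harmonic_sub_harmonic
        (by rw [← hsplit T]; exact Nat.le_add_right _ _) (hmax T hT)

theorem exists_cover_card_mul_le_sum_harmonic {r : ℕ} (hr : 0 < r) (R : Finset α)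
    (hdeg : ∀ x ∈ R, r ≤ #{T ∈ 𝒯 | x ∈ B T}) :
    ∃ 𝒞 ⊆ 𝒯, (∀ x ∈ R, ∃ T ∈ 𝒞, x ∈ B T) ∧
      (#𝒞 * r : ℚ) ≤ ∑ T ∈ 𝒯, harmonic #(B T ∩ R) := by
  classical
  induction R using Finset.strongInduction with
  | H R ih =>
  obtain rfl | ⟨x₀, hx₀⟩ := R.eq_empty_or_nonempty
  · refine ⟨∅, empty_subset _, by simp, ?_⟩
    simp [harmonic_zero]
  obtain ⟨T₀, hT₀⟩ := card_pos.1 (hr.trans_le (hdeg x₀ hx₀))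
  rw [mem_filter] at hT₀
  obtain ⟨G, hG𝒯, hmax⟩ := 𝒯.exists_max_image (fun T => #(B T ∩ R)) ⟨T₀, hT₀.1⟩
  have hG : (B G ∩ R).Nonempty :=
    card_pos.1 ((card_pos.2 ⟨x₀, mem_inter.2 ⟨hT₀.2, hx₀⟩⟩).trans_le (hmax T₀ hT₀.1))
  obtain ⟨𝒞, h𝒞𝒯, hcover, hcard⟩ := ih (R \ B G)
    ((ssubset_iff_of_subset sdiff_subset).2 <| let ⟨x, hx⟩ := hG
      ⟨x, (mem_inter.1 hx).2, fun h => (mem_sdiff.1 h).2 (mem_inter.1 hx).1⟩)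
    fun x hx => hdeg x (mem_sdiff.1 hx).1
  refine ⟨insert G 𝒞, insert_subset hG𝒯 h𝒞𝒯, fun x hx => ?_, ?_⟩
  · by_cases hxG : x ∈ B G
    · exact ⟨G, mem_insert_self _ _, hxG⟩
    · obtain ⟨T, hT, hxT⟩ := hcover x (mem_sdiff.2 ⟨hx, hxG⟩)
      exact ⟨T, mem_insert_of_mem hT, hxT⟩
  · have hdrop := le_sum_harmonic_sub_harmonic 𝒯 B hdeg hmax hG
    have hins : (#(insert G 𝒞) : ℚ) ≤ #𝒞 + 1 := by exact_mod_cast card_insert_le G 𝒞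
    rw [sum_sub_distrib] at hdrop
    calc (#(insert G 𝒞) * r : ℚ) ≤ (#𝒞 + 1) * r := by gcongr
      _ = #𝒞 * r + r := by ring
      _ ≤ _ := by linarith

end GreedyCover

def IsCoveringDesign {α : Type*} (t ℓ : ℕ) (𝒞 : Finset (Finset α)) : Prop :=
  (∀ T ∈ 𝒞, #T = t) ∧ ∀ L : Finset α, #L = ℓ → ∃ T ∈ 𝒞, L ⊆ T

theorem exists_isCoveringDesign_card_le {α : Type*} [Fintype α] [DecidableEq α] {t ℓ : ℕ}
    (hℓt : ℓ ≤ t) (ht : t ≤ Fintype.card α) :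
    ∃ 𝒞 : Finset (Finset α), IsCoveringDesign t ℓ 𝒞 ∧
      (#𝒞 : ℝ) ≤ (1 + Real.log (t.choose ℓ)) *
        ((Fintype.card α).choose ℓ / t.choose ℓ : ℝ) := by
  set n := Fintype.card α
  set r := (n - ℓ).choose (t - ℓ)
  have hr : 0 < r := Nat.choose_pos (by omega)
  have hdeg : ∀ L ∈ powersetCard ℓ (univ : Finset α),
      r ≤ #{T ∈ powersetCard t univ | L ∈ powersetCard ℓ T} := fun L hL => by
    have hL := (mem_powersetCard.1 hL).2
    have := card_filter_powersetCard_subset L univ t (subset_univ L) (hL.trans_le hℓt)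
    simp only [mem_powersetCard, hL, and_true, card_univ] at this ⊢
    rw [this]
  obtain ⟨𝒞, h𝒞, hcover, hcard⟩ :=
    exists_cover_card_mul_le_sum_harmonic _ _ hr (powersetCard ℓ univ) hdeg
  refine ⟨𝒞, ⟨fun T hT => (mem_powersetCard.1 (h𝒞 hT)).2, fun L hL => ?_⟩, ?_⟩
  · obtain ⟨T, hT, hLT⟩ := hcover L (mem_powersetCard.2 ⟨subset_univ L, hL⟩)
    exact ⟨T, hT, (mem_powersetCard.1 hLT).1⟩
  have hsum : ∑ T ∈ powersetCard t (univ : Finset α),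
      harmonic #(powersetCard ℓ T ∩ powersetCard ℓ univ) =
        n.choose t * harmonic (t.choose ℓ) := by
    rw [sum_congr rfl fun T hT => ?_, sum_const, card_powersetCard, card_univ, nsmul_eq_mul]
    rw [inter_eq_left.2 (powersetCard_mono (subset_univ T)), card_powersetCard,
      (mem_powersetCard.1 hT).2]
  have hq : (0 : ℝ) < t.choose ℓ := by exact_mod_cast Nat.choose_pos hℓt
  have hchoose : (n.choose t * t.choose ℓ : ℝ) = n.choose ℓ * r := by
    exact_mod_cast Nat.choose_mul hℓt
  have hcard' : (#𝒞 * r : ℝ) ≤ n.choose t * harmonic (t.choose ℓ) := by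
    rw [hsum] at hcard
    exact_mod_cast hcard
  have hr' : (0 : ℝ) < r := by exact_mod_cast hr
  rw [mul_div_assoc', le_div_iff₀ hq, ← mul_le_mul_iff_left₀ hr']
  calc (#𝒞 : ℝ) * t.choose ℓ * r = #𝒞 * r * t.choose ℓ := by ring
    _ ≤ n.choose t * harmonic (t.choose ℓ) * t.choose ℓ := by gcongr
    _ ≤ n.choose t * (1 + Real.log (t.choose ℓ)) * t.choose ℓ := by
        gcongr; exact harmonic_le_one_add_log _
    _ = (1 + Real.log (t.choose ℓ)) * n.choose ℓ * r := by
        linear_combination (1 + Real.log (t.choose ℓ)) * hchoose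

theorem Submodule.exists_finset_card_le_finrank_injOn_restrict {K ι : Type*} [Field K] [Fintype ι]
    (V : Submodule K (ι → K)) :
    ∃ s : Finset ι, #s ≤ finrank K V ∧ Set.InjOn (fun (w : ι → K) (i : s) => w i) V := by
  classical
  let φ : ι → Dual K V := fun i => LinearMap.proj i ∘ₗ V.subtype
  obtain ⟨b, -, -, hspan, hli⟩ :=
    exists_linearIndepOn_extension (linearIndepOn_empty K φ) (Set.empty_subset Set.univ)
  refine ⟨b.toFinset, ?_, fun w hw w' hw' hww' => ?_⟩
  · rw [Set.toFinset_card, ← Subspace.dual_finrank_eq]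
    exact hli.fintype_card_le_finrank
  · -- the coordinates indexed by `b` span all coordinate functionals on `V`
    have hb : span K (φ '' b) ≤ LinearMap.ker (Dual.eval K V ⟨w - w', V.sub_mem hw hw'⟩) := by
      rw [Submodule.span_le]
      rintro _ ⟨i, hi, rfl⟩
      have := congrFun hww' ⟨i, Set.mem_toFinset.2 hi⟩
      simp [φ, this]
    funext i
    have := hb (hspan ⟨i, Set.mem_univ i, rfl⟩)
    simpa [φ, sub_eq_zero] using this

open scoped Classical in
noncomputable def signVectors (ι : Type*) [Fintype ι] : Finset (ι → ℝ) :=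
  Fintype.piFinset fun _ => {1, -1}

section SignVectors

open scoped Classical

variable {ι : Type*} [Fintype ι]

theorem card_signVectors : #(signVectors ι) = 2 ^ Fintype.card ι := by
  simp [signVectors, Finset.card_pair (show (1 : ℝ) ≠ -1 by norm_num)]

theorem card_signVectors_filter_mem_le (V : Submodule ℝ (ι → ℝ)) :
    #{w ∈ signVectors ι | w ∈ V} ≤ 2 ^ finrank ℝ V := by
  obtain ⟨s, hs, hinj⟩ := V.exists_finset_card_le_finrank_injOn_restrict
  calc #{w ∈ signVectors ι | w ∈ V} ≤ #(signVectors s) := by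
        refine card_le_card_of_injOn (fun w (i : s) => w i) (fun w hw => ?_)
          (hinj.mono fun w hw => (mem_filter.1 hw).2)
        simp only [coe_filter, signVectors, Set.mem_ofPred_eq, Fintype.mem_piFinset,
          mem_coe] at hw ⊢
        exact fun i => hw.1 i
    _ ≤ 2 ^ finrank ℝ V := by
        rw [card_signVectors, Fintype.card_coe]
        exact Nat.pow_le_pow_right two_pos hs

theorem two_pow_card_le_card_mul_two_pow {β : Type*} (𝒞 : Finset β)
    (V : β → Submodule ℝ (ι → ℝ)) {d : ℕ} (hV : ∀ T ∈ 𝒞, finrank ℝ (V T) ≤ d)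
    (hcover : ∀ w ∈ signVectors ι, ∃ T ∈ 𝒞, w ∈ V T) :
    2 ^ Fintype.card ι ≤ #𝒞 * 2 ^ d := by
  calc 2 ^ Fintype.card ι = #(signVectors ι) := card_signVectors.symm
    _ ≤ #(𝒞.biUnion fun T => {w ∈ signVectors ι | w ∈ V T}) := by
        refine card_le_card fun w hw => ?_
        obtain ⟨T, hT, hwT⟩ := hcover w hw
        exact mem_biUnion.2 ⟨T, hT, mem_filter.2 ⟨hw, hwT⟩⟩
    _ ≤ ∑ T ∈ 𝒞, #{w ∈ signVectors ι | w ∈ V T} := card_biUnion_le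
    _ ≤ #𝒞 * 2 ^ d := by
        refine sum_le_card_nsmul _ _ _ fun T hT => ?_
        exact (card_signVectors_filter_mem_le _).trans (Nat.pow_le_pow_right two_pos (hV T hT))

end SignVectors

theorem Matrix.col_mul_mem_span_col {m n p R : Type*} [Fintype n] [CommSemiring R]
    (D : Matrix m n R) (A : Matrix n p R) (j : p) {s : Finset n}
    (hs : ∀ x, A x j ≠ 0 → x ∈ s) :
    (fun i => (D * A) i j) ∈ Submodule.span R (Set.range fun x : s => Dᵀ x) := by
  have hcol : (fun i => (D * A) i j) = ∑ x, A x j • Dᵀ x := by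
    ext i
    simp [Matrix.mul_apply, Finset.sum_apply, mul_comm]
  rw [hcol]
  refine Submodule.sum_mem _ fun x _ => ?_
  by_cases hx : A x j = 0
  · simp [hx]
  · exact Submodule.smul_mem _ _ (Submodule.subset_span ⟨⟨x, hs x hx⟩, rfl⟩)

theorem IsPMOneProtocol.exists_mem_span_of_isCoveringDesign {k n ℓ t : ℕ}
    {D : Matrix (Fin k) (Fin n) ℝ} {A : Matrix (Fin n) (Fin (2 ^ k)) ℝ}
    (h : IsPMOneProtocol k n ℓ D A) {𝒞 : Finset (Finset (Fin n))}
    (h𝒞 : IsCoveringDesign t ℓ 𝒞) (hℓn : ℓ ≤ n) (w : Fin k → ℝ)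
    (hw : w ∈ signVectors (Fin k)) :
    ∃ T ∈ 𝒞, w ∈ Submodule.span ℝ (Set.range fun x : T => Dᵀ x) := by
  classical
  obtain ⟨j, hj⟩ := h.1 w (by simpa [signVectors] using hw)
  let F : Finset (Fin n) := {x | A x j ≠ 0}
  have hF : #F ≤ ℓ := by simpa [F, ← Set.ncard_coe_finset] using h.2 j
  obtain ⟨L, hFL, hL⟩ := exists_superset_card_eq hF (by simpa using hℓn)
  obtain ⟨T, hT, hLT⟩ := h𝒞.2 L hL
  refine ⟨T, hT, ?_⟩
  have hwcol : w = fun i => (D * A) i j := funext fun i => (hj i).symm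
  rw [hwcol]
  exact D.col_mul_mem_span_col A j fun x hx => hLT (hFL (by simpa [F] using hx))

/-- Improved general lower bound: a `{±1}`-protocol with parameters `(k,n,ℓ)` must satisfy,
for every `t` with `ℓ ≤ t ≤ n`,
`2^k ≤ (1 + ln (t choose ℓ)) · (n choose ℓ)/(t choose ℓ) · 2^t`. -/
theorem improved_lower_bound (k n ℓ t : ℕ) (D : Matrix (Fin k) (Fin n) ℝ)
    (A : Matrix (Fin n) (Fin (2 ^ k)) ℝ) (h : IsPMOneProtocol k n ℓ D A)
    (hℓt : ℓ ≤ t) (htn : t ≤ n) :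
    (2 : ℝ) ^ k ≤ (1 + Real.log (Nat.choose t ℓ)) *
      ((Nat.choose n ℓ : ℝ) / (Nat.choose t ℓ : ℝ)) * 2 ^ t := by
  obtain ⟨𝒞, h𝒞, h𝒞card⟩ :=
    exists_isCoveringDesign_card_le (α := Fin n) hℓt (by simpa using htn)
  rw [Fintype.card_fin] at h𝒞card
  have hcount : 2 ^ k ≤ #𝒞 * 2 ^ t := by
    simpa using two_pow_card_le_card_mul_two_pow 𝒞
      (fun T => Submodule.span ℝ (Set.range fun x : T => Dᵀ x))
      (fun T hT => (finrank_range_le_card _).trans_eq (by simpa using h𝒞.1 T hT))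
      (h.exists_mem_span_of_isCoveringDesign h𝒞 (hℓt.trans htn))
  calc (2 : ℝ) ^ k ≤ #𝒞 * 2 ^ t := by exact_mod_cast hcount
    _ ≤ _ := by gcongr
end

section
/- If 2ℓ₀ + log₂ C(n₀,ℓ₀) − log₂ C(2ℓ₀,ℓ₀) < k₀ (with 2ℓ₀ ≤ n₀), then there is no matrix M ∈ ℝ^{k₀×n₀} such that every w ∈ {±1}^{k₀} lies in the linear span of at most ℓ₀ columns of M. -/
/-!
A subspace of `K^k` of dimension `d` is determined by some `d` coordinates, so it contains at
most `2^d` sign vectors. Double count the pairs `(w, T)` with `w` a sign vector, `T` a set of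
`2ℓ` columns and `w` in the span of `T`: each `T` carries at most `2^{2ℓ}` sign vectors, while
each `w`, lying in the span of some `ℓ` columns, lies in the span of all `C(n-ℓ, ℓ)` sets `T`
containing them. Hence `2^k C(n-ℓ,ℓ) ≤ C(n,2ℓ) 2^{2ℓ}`, which by
`C(n,2ℓ) C(2ℓ,ℓ) = C(n,ℓ) C(n-ℓ,ℓ)` is `2^k C(2ℓ,ℓ) ≤ 2^{2ℓ} C(n,ℓ)`, the negation of the
hypothesis.
-/

open Finset Module
open scoped Matrix

variable {K ι κ : Type*} [Field K]

theorem Submodule.exists_finset_card_le_finrank_forall_eq_zero [Finite ι]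
    (V : Submodule K (ι → K)) :
    ∃ D : Finset ι, #D ≤ finrank K V ∧ ∀ v ∈ V, (∀ i ∈ D, v i = 0) → v = 0 := by
  classical
  induction hd : finrank K V using Nat.strong_induction_on generalizing V with
  | _ d ih =>
  by_cases hV : ∀ v ∈ V, v = 0
  · exact ⟨∅, by simp, fun v hv _ => hV v hv⟩
  push Not at hV
  obtain ⟨v₀, hv₀, hv₀_ne⟩ := hV
  obtain ⟨i₀, hi₀⟩ := Function.ne_iff.mp hv₀_ne
  -- cutting `V` by `v i₀ = 0` drops the dimension, and `i₀` then detects what was cut away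
  set V' := V ⊓ LinearMap.ker (LinearMap.proj (R := K) (φ := fun _ : ι => K) i₀)
  have hV'_lt : finrank K V' < d :=
    hd ▸ Submodule.finrank_lt_finrank_of_lt (inf_le_left.lt_of_ne fun h => hi₀ (h ▸ hv₀).2)
  obtain ⟨D, hD_card, hD⟩ := ih _ hV'_lt V' rfl
  refine ⟨insert i₀ D, (card_insert_le _ _).trans (by omega), fun v hv hvD => ?_⟩
  exact hD v ⟨hv, hvD i₀ (mem_insert_self _ _)⟩ fun i hi => hvD i (mem_insert_of_mem hi)

def signVector (b : ι → Bool) : ι → K := fun i => if b i then 1 else -1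

theorem signVector_eq_one_or_eq_neg_one (b : ι → Bool) (i : ι) :
    signVector (K := K) b i = 1 ∨ signVector (K := K) b i = -1 := by
  unfold signVector; split_ifs <;> simp

theorem signVector_apply_eq_one_iff [NeZero (2 : K)] (b : ι → Bool) (i : ι) :
    signVector (K := K) b i = 1 ↔ b i := by
  have : (-1 : K) ≠ 1 := fun h => two_ne_zero (α := K) (by linear_combination -h)
  cases h : b i <;> simp [signVector, h, this]

theorem signVector_injective [NeZero (2 : K)] :
    Function.Injective (signVector (K := K) (ι := ι)) := fun b₁ b₂ h => funext fun i =>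
  Bool.eq_iff_iff.mpr <| by
    rw [← signVector_apply_eq_one_iff (K := K), ← signVector_apply_eq_one_iff (K := K), h]

theorem card_filter_signVector_mem_le [Fintype ι] [DecidableEq ι] [NeZero (2 : K)]
    (V : Submodule K (ι → K)) [DecidablePred (· ∈ V)] :
    #{b : ι → Bool | signVector b ∈ V} ≤ 2 ^ finrank K V := by
  obtain ⟨D, hD_card, hD⟩ := V.exists_finset_card_le_finrank_forall_eq_zero
  have hinj : Set.InjOn D.restrict
      (({b | signVector b ∈ V} : Finset (ι → Bool)) : Set (ι → Bool)) := by
    intro b₁ hb₁ b₂ hb₂ h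
    simp only [coe_filter, mem_univ, true_and, Set.mem_ofPred_eq] at hb₁ hb₂
    refine signVector_injective (K := K) (sub_eq_zero.mp (hD _ (V.sub_mem hb₁ hb₂) fun i hi => ?_))
    simp [signVector, show b₁ i = b₂ i from congrFun h ⟨i, hi⟩]
  calc #{b : ι → Bool | signVector b ∈ V}
      ≤ #(univ : Finset (D → Bool)) := card_le_card_of_injOn _ (fun _ _ => mem_univ _) hinj
    _ = 2 ^ #D := by simp
    _ ≤ 2 ^ finrank K V := Nat.pow_le_pow_right two_pos hD_card

theorem Finset.card_filter_powersetCard_superset [Fintype ι] [DecidableEq ι] {S : Finset ι}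
    {m : ℕ} (hS : #S ≤ m) :
    #{T ∈ powersetCard m univ | S ⊆ T} = (Fintype.card ι - #S).choose (m - #S) := by
  rw [← card_compl, ← card_powersetCard]
  refine card_nbij' (· \ S) (S ∪ ·) ?_ ?_ ?_ ?_
  · intro T hT
    simp only [coe_filter, mem_powersetCard, subset_univ, true_and, Set.mem_ofPred_eq] at hT
    simp [card_sdiff_of_subset hT.2, hT.1, subset_iff]
  · intro U hU
    simp only [mem_coe, mem_powersetCard, subset_compl_iff_disjoint_left] at hU
    simp only [coe_filter, mem_powersetCard, subset_univ, true_and, Set.mem_ofPred_eq,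
      subset_union_left, and_true]
    rw [card_union_of_disjoint hU.1, hU.2]
    omega
  · intro T hT
    simp only [coe_filter, mem_powersetCard, subset_univ, true_and, Set.mem_ofPred_eq] at hT
    exact union_sdiff_of_subset hT.2
  · intro U hU
    simp only [mem_coe, mem_powersetCard, subset_compl_iff_disjoint_left] at hU
    exact union_sdiff_cancel_left hU.1

theorem Submodule.finrank_span_image_finset_le (v : κ → ι → K) (T : Finset κ) :
    finrank K (span K (v '' T)) ≤ #T := by
  classical
  rw [← coe_image]
  exact (finrank_span_finset_le_card _).trans card_image_le

theorem two_pow_card_mul_choose_le_choose_mul_two_pow [Fintype ι] [Fintype κ]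
    [NeZero (2 : K)] (v : κ → ι → K) {ℓ : ℕ} (hℓ : ℓ ≤ Fintype.card κ)
    (hv : ∀ b : ι → Bool, ∃ S : Finset κ, #S ≤ ℓ ∧ signVector b ∈ Submodule.span K (v '' S)) :
    2 ^ Fintype.card ι * (Fintype.card κ - ℓ).choose ℓ ≤
      (Fintype.card κ).choose (2 * ℓ) * 2 ^ (2 * ℓ) := by
  classical
  set r : (ι → Bool) → Finset κ → Prop := fun b T => signVector b ∈ Submodule.span K (v '' T)
  have hcount := card_mul_le_card_mul r (s := univ) (t := powersetCard (2 * ℓ) univ)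
    (m := (Fintype.card κ - ℓ).choose ℓ) (n := 2 ^ (2 * ℓ)) ?_ ?_
  · simpa using hcount
  · intro b _
    obtain ⟨S, hS_card, hS⟩ := hv b
    obtain ⟨S', hSS', hS'_card⟩ := exists_superset_card_eq hS_card hℓ
    calc (Fintype.card κ - ℓ).choose ℓ = #{T ∈ powersetCard (2 * ℓ) univ | S' ⊆ T} := by
          rw [card_filter_powersetCard_superset (by omega), hS'_card, two_mul, Nat.add_sub_cancel]
      _ ≤ #((powersetCard (2 * ℓ) univ).bipartiteAbove r b) :=
          card_le_card <| monotone_filter_right _ fun T _ hS'T =>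
            Submodule.span_mono (Set.image_mono (coe_subset.mpr (hSS'.trans hS'T))) hS
  · intro T hT
    calc #(univ.bipartiteBelow r T) ≤ 2 ^ finrank K (Submodule.span K (v '' T)) :=
          card_filter_signVector_mem_le (Submodule.span K (v '' T))
      _ ≤ 2 ^ (2 * ℓ) := Nat.pow_le_pow_right two_pos <|
          (Submodule.finrank_span_image_finset_le v T).trans (mem_powersetCard.mp hT).2.le

theorem two_pow_card_mul_choose_le_two_pow_mul_choose [Fintype ι] [Fintype κ]
    [NeZero (2 : K)] (v : κ → ι → K) {ℓ : ℕ} (hℓ : 2 * ℓ ≤ Fintype.card κ)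
    (hv : ∀ b : ι → Bool, ∃ S : Finset κ, #S ≤ ℓ ∧ signVector b ∈ Submodule.span K (v '' S)) :
    2 ^ Fintype.card ι * (2 * ℓ).choose ℓ ≤ 2 ^ (2 * ℓ) * (Fintype.card κ).choose ℓ := by
  set n := Fintype.card κ
  have hcount := two_pow_card_mul_choose_le_choose_mul_two_pow v (by omega) hv
  have hpos : 0 < (n - ℓ).choose ℓ := Nat.choose_pos (by omega)
  have hchoose : n.choose (2 * ℓ) * (2 * ℓ).choose ℓ = n.choose ℓ * (n - ℓ).choose ℓ := by
    simpa [two_mul] using Nat.choose_mul (n := n) (k := 2 * ℓ) (s := ℓ) (by omega)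
  refine Nat.le_of_mul_le_mul_right ?_ hpos
  calc 2 ^ Fintype.card ι * (2 * ℓ).choose ℓ * (n - ℓ).choose ℓ
      = 2 ^ Fintype.card ι * (n - ℓ).choose ℓ * (2 * ℓ).choose ℓ := by ring
    _ ≤ n.choose (2 * ℓ) * 2 ^ (2 * ℓ) * (2 * ℓ).choose ℓ := Nat.mul_le_mul_right _ hcount
    _ = 2 ^ (2 * ℓ) * n.choose ℓ * (n - ℓ).choose ℓ := by rw [mul_right_comm, hchoose]; ring

theorem Real.add_logb_two_sub_logb_two_lt_iff {a b : ℝ} (ha : 0 < a) (hb : 0 < b) (p q : ℕ) :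
    p + logb 2 a - logb 2 b < q ↔ 2 ^ p * a < 2 ^ q * b := by
  rw [← logb_lt_logb_iff (x := 2 ^ p * a) (y := 2 ^ q * b) one_lt_two (by positivity)
      (by positivity), logb_mul (by positivity) ha.ne', logb_mul (by positivity) hb.ne',
    logb_pow, logb_pow, logb_self_eq_one one_lt_two]
  constructor <;> intro h <;> linarith

/-- Contrapositive form of the block-construction lower bound: if
`2ℓ₀ + log₂ (n₀ choose ℓ₀) − log₂ (2ℓ₀ choose ℓ₀) < k₀` (with `2ℓ₀ ≤ n₀`), then no matrix
`M ∈ ℝ^{k₀×n₀}` has every `w ∈ {±1}^{k₀}` in the span of at most `ℓ₀` of its columns. -/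
theorem no_block_construction (k₀ n₀ ℓ₀ : ℕ) (hℓn : 2 * ℓ₀ ≤ n₀)
    (hlt : 2 * (ℓ₀ : ℝ) + Real.logb 2 (Nat.choose n₀ ℓ₀)
        - Real.logb 2 (Nat.choose (2 * ℓ₀) ℓ₀) < (k₀ : ℝ)) :
    ¬ ∃ M : Matrix (Fin k₀) (Fin n₀) ℝ,
        ∀ w : Fin k₀ → ℝ, (∀ i, w i = 1 ∨ w i = -1) →
          ∃ S : Finset (Fin n₀), S.card ≤ ℓ₀ ∧
            w ∈ Submodule.span ℝ ((fun j => fun i => M i j) '' ↑S) := by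
  rintro ⟨M, hM⟩
  have hbound := two_pow_card_mul_choose_le_two_pow_mul_choose Mᵀ (by simpa using hℓn)
    fun b => hM _ (signVector_eq_one_or_eq_neg_one b)
  rw [Fintype.card_fin, Fintype.card_fin] at hbound
  have hchoose_pos : 0 < n₀.choose ℓ₀ := Nat.choose_pos (by omega)
  have hcentral_pos : 0 < (2 * ℓ₀).choose ℓ₀ := Nat.choose_pos (by omega)
  have hlt' := (Real.add_logb_two_sub_logb_two_lt_iff (a := n₀.choose ℓ₀)
    (b := (2 * ℓ₀).choose ℓ₀) (by exact_mod_cast hchoose_pos) (by exact_mod_cast hcentral_pos)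
    (2 * ℓ₀) k₀).mp
    (by push_cast; exact hlt)
  exact absurd hbound (by exact_mod_cast hlt'.not_ge)
end
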